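/- arXiv:1103.2762 — 7 statements merged into one kernel-verified Lean document; each statement's English description precedes it below -/
import Mathlib

section
/- If X is a second-countable topological space and Φ is a family of upper semi-continuous functions from X to [-∞,∞], then there exists a countable subfamily Φ₀ ⊆ Φ such that the pointwise infimum of Φ₀ equals the pointwise infimum of Φ. -/
/-- If `X` is second-countable and `Φ` is a family of upper semi-continuous
functions `X → [-∞,∞]`, then there is a countable subfamily whose pointwise
infimum equals the pointwise infimum of the whole family. -/
theorem countable_subfamily_inf {X : Type*} [TopologicalSpace X]
    [SecondCountableTopology X] {ι : Type*} (Φ : ι → X → EReal)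
    (hΦ : ∀ i, ∀ r : ℝ, IsOpen {x : X | Φ i x < (r : EReal)}) :
    ∃ s : Set ι, s.Countable ∧ ∀ x : X, (⨅ i : s, Φ i x) = ⨅ i, Φ i x := by
  classical
  set B := TopologicalSpace.countableBasis X
  have hBbasis := TopologicalSpace.isBasis_countableBasis X
  have hBc : B.Countable := TopologicalSpace.countable_countableBasis X
  set T : Set (Set X × ℚ) :=
    {p | p.1 ∈ B ∧ ∃ i, ∀ x ∈ p.1, Φ i x < ((p.2 : ℝ) : EReal)} with hT
  have hTc : T.Countable := by
    have : T ⊆ B ×ˢ (Set.univ : Set ℚ) := fun p hp => ⟨hp.1, trivial⟩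
    exact (hBc.prod (Set.countable_univ)).mono this
  choose f hf using fun p : T => p.property.2
  refine ⟨Set.range f, ?_, ?_⟩
  · have := hTc.to_subtype
    exact Set.countable_range f
  · intro x
    refine le_antisymm ?_ (le_iInf fun ⟨i, _⟩ => iInf_le _ i)
    by_contra h
    push_neg at h
    obtain ⟨q, hq1, hq2⟩ := EReal.exists_rat_btwn_of_lt h
    obtain ⟨i, hi⟩ := iInf_lt_iff.1 hq1
    obtain ⟨U, hUB, hxU, hUsub⟩ := hBbasis.exists_subset_of_mem_open hi (hΦ i q)
    have hpT : (U, q) ∈ T := ⟨hUB, i, fun y hy => hUsub hy⟩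
    have hfx : Φ (f ⟨(U, q), hpT⟩) x < ((q : ℝ) : EReal) := hf ⟨(U, q), hpT⟩ x hxU
    have : (⨅ i : Set.range f, Φ i x) ≤ ((q : ℝ) : EReal) :=
      le_of_lt (lt_of_le_of_lt (iInf_le _ ⟨f ⟨(U, q), hpT⟩, Set.mem_range_self _⟩) hfx)
    exact absurd (lt_of_le_of_lt this hq2) (lt_irrefl _)
end

section
/- Let X and Y be Polish spaces and φ : X × Y → [-∞,∞] a Baire measurable function. Then inf*_{(x,y)} φ(x,y) = inf*_x inf*_y φ(x,y), where inf*_x ψ(x) denotes the maximum r such that {x : ψ(x) ≥ r} is comeagre (this maximum is attained). -/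
/-!
Both sides are computed from the superlevel sets `{φ ≥ r}`, which are Baire measurable:
`r ≤ inf* φ` iff `{φ ≥ r}` is comeagre, since the supremum defining `inf*` is a countable
one and so is attained. The Kuratowski–Ulam theorem says that a Baire measurable set in
`X × Y` is comeagre iff comeagrely many of its vertical sections are comeagre, which turns
`{φ ≥ r}` comeagre into `inf*_y φ(x, y) ≥ r` for comeagrely many `x`.
-/

/-- A function into `[-∞,∞]` is Baire measurable if the preimage of every Borel
set is Baire measurable (has the Baire property). -/
def BaireMeasurableFun {X : Type*} [TopologicalSpace X] (φ : X → EReal) : Prop :=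
  ∀ s : Set EReal, MeasurableSet s → BaireMeasurableSet (φ ⁻¹' s)

/-- `inf* φ`: the greatest `r` such that `φ ≥ r` on a comeagre set (the supremum
below is in fact attained). -/
noncomputable def infStar {X : Type*} [TopologicalSpace X] (φ : X → EReal) : EReal :=
  sSup {r : EReal | {x : X | r ≤ φ x} ∈ residual X}

open Filter Set Topology TopologicalSpace

section KuratowskiUlam

variable {X Y : Type*} [TopologicalSpace X] [TopologicalSpace Y]

lemma eventually_residual_dense_preimage_prodMk [SecondCountableTopology Y] {U : Set (X × Y)}
    (hUo : IsOpen U) (hUd : Dense U) :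
    ∀ᶠ x in residual X, Dense (Prod.mk x ⁻¹' U) := by
  have hB := isBasis_countableBasis Y
  have hmeets :
      ∀ V ∈ countableBasis Y, ∀ᶠ x in residual X, (V ∩ Prod.mk x ⁻¹' U).Nonempty := by
    intro V hV
    refine residual_of_dense_open ?_ ?_
    · have hproj :
          {x | (V ∩ Prod.mk x ⁻¹' U).Nonempty} = Prod.fst '' (univ ×ˢ V ∩ U) := by
        ext x
        simp [Set.Nonempty, and_assoc]
      rw [hproj]
      exact isOpenMap_fst _ ((isOpen_univ.prod (hB.isOpen hV)).inter hUo)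
    · refine dense_iff_inter_open.2 fun W hWo hWne => ?_
      obtain ⟨⟨x, y⟩, ⟨hx, hy⟩, hxy⟩ := hUd.inter_open_nonempty _ (hWo.prod (hB.isOpen hV))
        (hWne.prod (nonempty_of_mem_countableBasis hV))
      exact ⟨x, hx, y, hy, hxy⟩
  filter_upwards [(eventually_countable_ball (countable_countableBasis Y)).2 hmeets] with x hx
  exact hB.dense_iff.2 fun V hV _ => hx V hV

/-- The easy half of the Kuratowski–Ulam theorem. -/
lemma eventually_residual_preimage_prodMk_mem_residual [SecondCountableTopology Y]
    {S : Set (X × Y)} (hS : S ∈ residual (X × Y)) :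
    ∀ᶠ x in residual X, Prod.mk x ⁻¹' S ∈ residual Y := by
  obtain ⟨T, hTo, hTd, hTc, hTS⟩ := mem_residual_iff.1 hS
  have hsections : ∀ᶠ x in residual X, ∀ U ∈ T, Dense (Prod.mk x ⁻¹' U) :=
    (eventually_countable_ball hTc).2 fun U hU =>
      eventually_residual_dense_preimage_prodMk (hTo U hU) (hTd U hU)
  filter_upwards [hsections] with x hx
  refine mem_of_superset ((countable_bInter_mem hTc).2 fun U hU =>
    residual_of_dense_open ((hTo U hU).preimage (Continuous.prodMk_right x)) (hx U hU)) ?_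
  simpa only [preimage_sInter] using preimage_mono hTS

lemma dense_of_dense_setOf_dense_preimage_prodMk {U : Set (X × Y)}
    (h : Dense {x | Dense (Prod.mk x ⁻¹' U)}) : Dense U := by
  refine dense_iff_inter_open.2 fun W hWo ⟨⟨a, b⟩, hab⟩ => ?_
  obtain ⟨A, B, hA, hB, haA, hbB, hABW⟩ := isOpen_prod_iff.1 hWo a b hab
  obtain ⟨x, hxA, hxU⟩ := h.inter_open_nonempty A hA ⟨a, haA⟩
  obtain ⟨y, hyB, hyU⟩ := hxU.inter_open_nonempty B hB ⟨b, hbB⟩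
  exact ⟨(x, y), hABW ⟨hxA, hyB⟩, hyU⟩

/-- The hard half of the Kuratowski–Ulam theorem. -/
lemma mem_residual_of_eventually_preimage_prodMk_mem_residual [BaireSpace X] [BaireSpace Y]
    [SecondCountableTopology Y] {S : Set (X × Y)} (hS : BaireMeasurableSet S)
    (h : ∀ᶠ x in residual X, Prod.mk x ⁻¹' S ∈ residual Y) :
    S ∈ residual (X × Y) := by
  obtain ⟨U, hUo, hSU⟩ := hS.residualEq_isOpen
  have hSU' : {p | p ∈ S ↔ p ∈ U} ∈ residual (X × Y) := eventuallyEq_set.1 hSU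
  have hUsections : ∀ᶠ x in residual X, Dense (Prod.mk x ⁻¹' U) := by
    filter_upwards [h, eventually_residual_preimage_prodMk_mem_residual hSU'] with x hSx hSUx
    exact dense_of_mem_residual (mem_of_superset (inter_mem hSx hSUx) fun y hy => hy.2.1 hy.1)
  have hUd : Dense U :=
    dense_of_dense_setOf_dense_preimage_prodMk (dense_of_mem_residual hUsections)
  exact mem_of_superset (inter_mem (residual_of_dense_open hUo hUd) hSU') fun p hp =>
    hp.2.2 hp.1

end KuratowskiUlam

section infStar

variable {X : Type*} [TopologicalSpace X]

lemma eventually_infStar_le (ψ : X → EReal) : ∀ᶠ x in residual X, infStar ψ ≤ ψ x := by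
  obtain ⟨u, -, hu, hmem⟩ := exists_seq_tendsto_sSup
    (⟨⊥, by simp⟩ : {r : EReal | ∀ᶠ x in residual X, r ≤ ψ x}.Nonempty) (OrderTop.bddAbove _)
  filter_upwards [eventually_countable_forall.2 hmem] with x hx
  exact le_of_tendsto' hu hx

lemma le_infStar_iff {ψ : X → EReal} {r : EReal} :
    r ≤ infStar ψ ↔ ∀ᶠ x in residual X, r ≤ ψ x :=
  ⟨fun h => (eventually_infStar_le ψ).mono fun _ hx => h.trans hx, fun h => le_sSup h⟩

end infStar

/-- Kuratowski–Ulam for functions: for Baire measurable `φ : X × Y → [-∞,∞]` on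
Polish spaces, `inf*_{(x,y)} φ = inf*_x inf*_y φ(x,y)`. -/
theorem infStar_comm {X Y : Type*} [TopologicalSpace X] [PolishSpace X]
    [TopologicalSpace Y] [PolishSpace Y] (φ : X × Y → EReal)
    (hφ : BaireMeasurableFun φ) :
    infStar φ = infStar (fun x : X => infStar (fun y : Y => φ (x, y))) := by
  refine le_antisymm (sSup_le fun r hr => le_infStar_iff.2 ?_) ?_
  · filter_upwards [eventually_residual_preimage_prodMk_mem_residual hr] with x hx
    exact le_infStar_iff.2 hx
  · refine le_sSup (mem_residual_of_eventually_preimage_prodMk_mem_residual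
      (hφ _ measurableSet_Ici) ?_)
    filter_upwards [eventually_infStar_le _] with x hx
    exact le_infStar_iff.1 hx
end

section
/- Let X and Y be Polish spaces and φ : X × Y → [-∞,∞] Baire measurable. Then the set of x ∈ X such that the function y ↦ φ(x,y) is Baire measurable is comeagre in X. -/
/-!
The heart of the matter is the Kuratowski–Ulam theorem: for `Y` second countable, a comeagre
subset of `X × Y` has comeagre sections over comeagrely many `x`. It suffices to check this for
a dense open `U`; for each `V` in a countable basis of `Y` the set of `x` whose section meets `V`
is the projection of `U ∩ (X × V)`, hence open and dense, and the countably many of these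
intersect in the `x` with dense open section. Consequently a set `A =ᵇ U` with `U` open has, for
comeagrely many `x`, its section equal modulo a meagre set to the open section `U_x`. Applying
this to the preimages of the members of a countable basis of `[-∞,∞]`, which generate its Borel
σ-algebra, gives the theorem.
-/

open Set Filter Topology TopologicalSpace MeasureTheory

section KuratowskiUlam

variable {X Y : Type*} [TopologicalSpace X] [TopologicalSpace Y] [SecondCountableTopology Y]

theorem eventually_residual_dense_section {U : Set (X × Y)} (hUo : IsOpen U) (hUd : Dense U) :
    ∀ᶠ x in residual X, Dense {y | (x, y) ∈ U} := by
  obtain ⟨B, hBc, hBne, hB⟩ := exists_countable_basis Y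
  have hmeets : ∀ V ∈ B, ∀ᶠ x in residual X, (V ∩ {y | (x, y) ∈ U}).Nonempty := by
    intro V hV
    have hproj : {x | (V ∩ {y | (x, y) ∈ U}).Nonempty} = Prod.fst '' (U ∩ univ ×ˢ V) := by
      ext x
      simp [Set.Nonempty, and_comm]
    rw [Filter.Eventually, hproj]
    have hVo := hB.isOpen hV
    refine residual_of_dense_open (isOpenMap_fst _ (hUo.inter (isOpen_univ.prod hVo)))
      (dense_iff_inter_open.2 fun W hWo hWne => ?_)
    obtain ⟨p, ⟨hpW, hpV⟩, hpU⟩ := hUd.inter_open_nonempty (W ×ˢ V) (hWo.prod hVo)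
      (hWne.prod (nonempty_iff_ne_empty.2 (ne_of_mem_of_not_mem hV hBne)))
    exact ⟨p.1, hpW, p, ⟨hpU, mem_univ _, hpV⟩, rfl⟩
  filter_upwards [(eventually_countable_ball hBc).2 hmeets] with x hx
  exact hB.dense_iff.2 fun V hV _ => hx V hV

theorem curry_residual_le_residual_prod : (residual X).curry (residual Y) ≤ residual (X × Y) :=
  le_countableGenerate_iff_of_countableInterFilter.2 fun U ⟨hUo, hUd⟩ =>
    mem_curry_iff.2 <| by
      filter_upwards [eventually_residual_dense_section hUo hUd] with x hx
      exact residual_of_dense_open (hUo.preimage (Continuous.prodMk_right x)) hx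

theorem BaireMeasurableSet.eventually_residual_section {A : Set (X × Y)}
    (hA : BaireMeasurableSet A) :
    ∀ᶠ x in residual X, BaireMeasurableSet {y | (x, y) ∈ A} := by
  obtain ⟨U, hUo, hAU⟩ := hA.residualEq_isOpen
  filter_upwards [mem_curry_iff.1 (curry_residual_le_residual_prod hAU)] with x hx
  exact (hUo.preimage (Continuous.prodMk_right x)).baireMeasurableSet.congr
    (hx.mono fun _ hy => hy.symm)

end KuratowskiUlam

theorem baireMeasurableSet_preimage_of_generateFrom {Z T : Type*} [TopologicalSpace Z]
    {B : Set (Set T)} {f : Z → T} (hf : ∀ V ∈ B, BaireMeasurableSet (f ⁻¹' V)) {s : Set T}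
    (hs : MeasurableSet[MeasurableSpace.generateFrom B] s) : BaireMeasurableSet (f ⁻¹' s) :=
  @measurable_generateFrom _ _ (eventuallyMeasurableSpace (borel Z) (residual Z)) _ _ hf s hs

theorem comeagre_sections_baireMeasurable_general {X Y : Type*}
    [TopologicalSpace X] [TopologicalSpace Y] [PolishSpace Y]
    (φ : X × Y → EReal) (hφ : BaireMeasurableFun φ) :
    {x : X | BaireMeasurableFun (fun y : Y => φ (x, y))} ∈ residual X := by
  obtain ⟨B, hBc, -, hB⟩ := exists_countable_basis EReal
  have hsections :
      ∀ V ∈ B, ∀ᶠ x in residual X, BaireMeasurableSet {y : Y | (x, y) ∈ φ ⁻¹' V} :=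
    fun V hV => (hφ V (hB.isOpen hV).measurableSet).eventually_residual_section
  filter_upwards [(eventually_countable_ball hBc).2 hsections] with x hx s hs
  refine baireMeasurableSet_preimage_of_generateFrom hx ?_
  rwa [← hB.borel_eq_generateFrom, ← BorelSpace.measurable_eq]

/-- For Baire measurable `φ : X × Y → [-∞,∞]` on Polish spaces, the set of `x`
such that `y ↦ φ (x, y)` is Baire measurable is comeagre in `X`. -/
theorem comeagre_sections_baireMeasurable {X Y : Type*}
    [TopologicalSpace X] [PolishSpace X] [TopologicalSpace Y] [PolishSpace Y]
    (φ : X × Y → EReal) (hφ : BaireMeasurableFun φ) :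
    {x : X | BaireMeasurableFun (fun y : Y => φ (x, y))} ∈ residual X :=
  comeagre_sections_baireMeasurable_general φ hφ
end

section
/- Let X be a Polish space and φ : X → [0,∞] a function. Define U(φ) as the pointwise infimum of all upper semi-continuous ψ : X → [0,∞] with φ ≤ ψ outside a meagre set. Then φ ≤ U(φ) outside a meagre set, and U(φ) is the least upper semi-continuous function with this property. -/
open scoped ENNReal

/-- A graded subset is open iff upper semi-continuous: strict sublevel sets are open. -/
def GradedOpen {X : Type*} [TopologicalSpace X] (φ : X → ℝ≥0∞) : Prop :=
  ∀ r : ℝ≥0∞, IsOpen {x : X | φ x < r}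

/-- `φ ≤* ψ`: `φ ≤ ψ` outside a meagre set. -/
def LeAE {X : Type*} [TopologicalSpace X] (φ ψ : X → ℝ≥0∞) : Prop :=
  IsMeagre {x : X | ψ x < φ x}

/-- `U(φ)`: pointwise infimum of all u.s.c. functions `ψ` with `φ ≤* ψ`. -/
noncomputable def Ugr {X : Type*} [TopologicalSpace X] (φ : X → ℝ≥0∞) : X → ℝ≥0∞ :=
  fun x => ⨅ ψ : {ψ : X → ℝ≥0∞ // GradedOpen ψ ∧ LeAE φ ψ}, ψ.val x

/-! Upper semicontinuity survives arbitrary infima. For `φ ≤* ⨅ i, ψ i`, second countability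
(Lindelöf) shows that below each rational level `q` the open set `{⨅ i, ψ i < q}` is already
covered by countably many `{ψ i < q}`, so `{⨅ i, ψ i < φ}` lies in a countable union of the
meagre sets `{ψ i < φ}`. -/

namespace GradedOpen

variable {X ι : Type*} [TopologicalSpace X]

theorem iInf {ψ : ι → X → ℝ≥0∞} (hψ : ∀ i, GradedOpen (ψ i)) : GradedOpen (⨅ i, ψ i) := by
  intro r
  simpa only [iInf_apply, iInf_lt_iff, Set.ofPred_exists] using isOpen_iUnion fun i => hψ i r

end GradedOpen

namespace LeAE

variable {X ι : Type*} [TopologicalSpace X]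

theorem iInf [SecondCountableTopology X] {φ : X → ℝ≥0∞} {ψ : ι → X → ℝ≥0∞}
    (hψ : ∀ i, GradedOpen (ψ i)) (hle : ∀ i, LeAE φ (ψ i)) : LeAE φ (⨅ i, ψ i) := by
  choose T hT_countable hT_union using fun q : ℚ =>
    TopologicalSpace.isOpen_iUnion_countable (fun i => {x | ψ i x < (Real.toNNReal q : ℝ≥0∞)})
      fun i => hψ i _
  refine (isMeagre_iUnion fun q => isMeagre_biUnion (hT_countable q) fun i _ => hle i).mono ?_
  intro x hx
  obtain ⟨q, -, hinf_q, hq_φ⟩ := ENNReal.lt_iff_exists_rat_btwn.mp hx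
  have hx_union : x ∈ ⋃ i, {x | ψ i x < (Real.toNNReal q : ℝ≥0∞)} := by
    simpa only [iInf_apply, iInf_lt_iff, Set.mem_iUnion, Set.mem_ofPred_eq] using hinf_q
  rw [← hT_union q] at hx_union
  simp only [Set.mem_iUnion, Set.mem_ofPred_eq] at hx_union ⊢
  obtain ⟨i, hi, hψ_q⟩ := hx_union
  exact ⟨q, i, hi, hψ_q.trans hq_φ⟩

end LeAE

theorem Ugr_eq_iInf {X : Type*} [TopologicalSpace X] (φ : X → ℝ≥0∞) :
    Ugr φ = ⨅ ψ : {ψ : X → ℝ≥0∞ // GradedOpen ψ ∧ LeAE φ ψ}, ψ.val := by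
  ext x
  rw [iInf_apply, Ugr]

/-- `φ ≤* U(φ)`, `U(φ)` is u.s.c., and `U(φ)` is the least u.s.c. function with
this property. -/
theorem Ugr_spec {X : Type*} [TopologicalSpace X] [PolishSpace X] (φ : X → ℝ≥0∞) :
    LeAE φ (Ugr φ) ∧ GradedOpen (Ugr φ) ∧
      ∀ ψ : X → ℝ≥0∞, GradedOpen ψ → LeAE φ ψ → ∀ x, Ugr φ x ≤ ψ x := by
  rw [Ugr_eq_iInf]
  exact ⟨LeAE.iInf (fun ψ => ψ.2.1) (fun ψ => ψ.2.2), GradedOpen.iInf fun ψ => ψ.2.1,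
    fun ψ hψ hφψ => iInf_le (fun ψ : {ψ : X → ℝ≥0∞ // GradedOpen ψ ∧ LeAE φ ψ} => ψ.val)
      ⟨ψ, hψ, hφψ⟩⟩
end

section
/- Let G be a Polish group and φ, ψ : G → [0,∞]. Then U(φ) ⋄ U(ψ) ≥ φ ⋄ ψ pointwise, where (α ⋄ β)(x) = inf_{h∈G} α(h) + β(h⁻¹x) and U(·) denotes the least upper semi-continuous majorant modulo meagre sets. (Pettis theorem for graded subsets.) -/
open scoped ENNReal

/-- Infimal convolution of graded subsets of a group. -/
noncomputable def gconv {G : Type*} [Group G] (α β : G → ℝ≥0∞) : G → ℝ≥0∞ :=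
  fun x => ⨅ h : G, α h + β (h⁻¹ * x)

/-!
If `U(φ)(h) < r` and `U(ψ)(h⁻¹x) < s`, then `h` has an open neighbourhood `U` on which
`φ < r` off a meagre set, and likewise `ψ(·⁻¹x) < s` off a meagre set on an open neighbourhood
`V` (meagre sets pull back to meagre sets under the homeomorphism `g ↦ g⁻¹x`). By the Baire
category theorem the nonempty open set `U ∩ V` is not meagre, so some `g` has `φ g < r` and
`ψ (g⁻¹x) < s`, whence `(φ ⋄ ψ)(x) < r + s`.
-/

open Filter

theorem ENNReal.le_add_of_forall_lt_imp_le_add {a b c : ℝ≥0∞}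
    (h : ∀ r s, a < r → b < s → c ≤ r + s) : c ≤ a + b := by
  refine ENNReal.le_of_forall_pos_le_add fun ε hε hab => ?_
  have hε2 : (ε / 2 : ℝ≥0∞) ≠ 0 := by simpa using hε.ne'
  obtain ⟨ha, hb⟩ := ENNReal.add_lt_top.1 hab
  calc c ≤ (a + ε / 2) + (b + ε / 2) :=
        h _ _ (ENNReal.lt_add_right ha.ne hε2) (ENNReal.lt_add_right hb.ne hε2)
    _ = a + b + ε := by rw [add_add_add_comm, ENNReal.add_halves]

section Ugr

variable {X : Type*} [TopologicalSpace X]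

theorem exists_isOpen_eventually_residual_lt_of_Ugr_lt {φ : X → ℝ≥0∞} {x : X} {r : ℝ≥0∞}
    (h : Ugr φ x < r) :
    ∃ U : Set X, IsOpen U ∧ x ∈ U ∧ ∀ᶠ y in residual X, y ∈ U → φ y < r := by
  obtain ⟨⟨ψ, hψ_open, hφψ⟩, hψx⟩ := iInf_lt_iff.1 h
  refine ⟨{y | ψ y < r}, hψ_open r, hψx, ?_⟩
  filter_upwards [hφψ] with y hy hyU using (not_lt.1 (Set.notMem_ofPred_iff.1 hy)).trans_lt hyU

theorem exists_lt_and_lt_of_Ugr_lt [BaireSpace X] {Y : Type*} [TopologicalSpace Y]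
    {f : X → Y} (hf : Continuous f) (hf_open : IsOpenMap f) {φ : X → ℝ≥0∞} {ψ : Y → ℝ≥0∞}
    {x : X} {r s : ℝ≥0∞} (hφ : Ugr φ x < r) (hψ : Ugr ψ (f x) < s) :
    ∃ y, φ y < r ∧ ψ (f y) < s := by
  obtain ⟨U, hU_open, hxU, hU⟩ := exists_isOpen_eventually_residual_lt_of_Ugr_lt hφ
  obtain ⟨V, hV_open, hxV, hV⟩ := exists_isOpen_eventually_residual_lt_of_Ugr_lt hψ
  have hgood : ∀ᶠ y in residual X, y ∈ U ∩ f ⁻¹' V → φ y < r ∧ ψ (f y) < s := by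
    filter_upwards [hU, tendsto_residual_of_isOpenMap hf hf_open hV] with y hφy hψy hy
      using ⟨hφy hy.1, hψy hy.2⟩
  obtain ⟨y, hy, hyUV⟩ := (dense_of_mem_residual hgood).exists_mem_open
    (hU_open.inter (hV_open.preimage hf)) ⟨x, hxU, hxV⟩
  exact ⟨y, hy hyUV⟩

end Ugr

/-- Pettis theorem for graded subsets: `U(φ) ⋄ U(ψ) ⊑ φ ⋄ ψ`, i.e.
`U(φ) ⋄ U(ψ) ≥ φ ⋄ ψ` pointwise. -/
theorem pettis_graded {G : Type*} [Group G] [TopologicalSpace G]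
    [IsTopologicalGroup G] [PolishSpace G] (φ ψ : G → ℝ≥0∞) :
    ∀ x : G, gconv φ ψ x ≤ gconv (Ugr φ) (Ugr ψ) x := by
  intro x
  refine le_iInf fun h => ENNReal.le_add_of_forall_lt_imp_le_add fun r s hr hs => ?_
  let f : G ≃ₜ G := (Homeomorph.inv G).trans (Homeomorph.mulRight x)
  obtain ⟨g, hφg, hψg⟩ := exists_lt_and_lt_of_Ugr_lt f.continuous f.isOpenMap hr hs
  calc gconv φ ψ x ≤ φ g + ψ (g⁻¹ * x) := iInf_le _ g
    _ ≤ r + s := add_le_add hφg.le hψg.le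
end

section
/- Let G be a topological group and H : G → [0,∞] a semi-norm (H(1)=0, H(g)=H(g⁻¹), H(gh) ≤ H(g)+H(h)). If inf over all x of limsup_{y→x} H(y) equals 0, then H is continuous. -/
open scoped ENNReal
open Filter

/-- A semi-norm (graded subgroup) on a group `G`. -/
def IsGradedSubgroup {G : Type*} [Group G] (H : G → ℝ≥0∞) : Prop :=
  H 1 = 0 ∧ (∀ g : G, H g⁻¹ = H g) ∧ ∀ g h : G, H (g * h) ≤ H g + H h

/-!
Right translation by `x` carries a neighbourhood of `1` into a neighbourhood of `x`, and
`H h ≤ H (h * x) + H x`; hence `limsup_{h → 1} H h ≤ 2 H°(x)` for every `x`, so the hypothesis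
forces `H h → 0` as `h → 1`. Continuity everywhere then follows from
`|H y - H g| ≤ H (g⁻¹ * y)`.
-/

open Topology

namespace IsGradedSubgroup

variable {G : Type*} [Group G] {H : G → ℝ≥0∞}

theorem le_mul_add (hH : IsGradedSubgroup H) (h x : G) : H h ≤ H (h * x) + H x := by
  simpa [mul_assoc, hH.2.1] using hH.2.2 (h * x) x⁻¹

theorem le_add_inv_mul (hH : IsGradedSubgroup H) (g y : G) : H y ≤ H g + H (g⁻¹ * y) := by
  simpa using hH.2.2 g (g⁻¹ * y)

theorem sub_inv_mul_le (hH : IsGradedSubgroup H) (g y : G) : H g - H (g⁻¹ * y) ≤ H y := by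
  rw [tsub_le_iff_right, ← hH.2.1 (g⁻¹ * y)]
  simpa using hH.2.2 y (g⁻¹ * y)⁻¹

variable [TopologicalSpace G] [ContinuousMul G]

theorem limsup_nhds_one_le (hH : IsGradedSubgroup H) (x : G) :
    limsup H (𝓝 1) ≤ 2 * limsup H (𝓝 x) := by
  have htrans : Tendsto (· * x) (𝓝 1) (𝓝 x) := by
    simpa using (continuous_mul_const x).tendsto 1
  calc limsup H (𝓝 1)
      ≤ limsup (fun h ↦ H (h * x) + H x) (𝓝 1) :=
        limsup_le_limsup (Eventually.of_forall (hH.le_mul_add · x))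
    _ = limsup (H ∘ (· * x)) (𝓝 1) + H x :=
        limsup_add_const _ _ _ (by isBoundedDefault) (by isBoundedDefault)
    _ ≤ limsup H (𝓝 x) + limsup H (𝓝 x) := by
        gcongr
        · exact limsup_le_limsup_of_le htrans
        · exact le_limsup_of_frequently_le' <|
            (frequently_pure (p := fun y ↦ H x ≤ H y)).2 le_rfl |>.filter_mono (pure_le_nhds x)
    _ = 2 * limsup H (𝓝 x) := (two_mul _).symm

theorem tendsto_nhds_one (hH : IsGradedSubgroup H) (h0 : ⨅ x : G, limsup H (𝓝 x) = 0) :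
    Tendsto H (𝓝 1) (𝓝 0) := by
  refine tendsto_of_le_liminf_of_limsup_le bot_le ?_
  calc limsup H (𝓝 1) ≤ ⨅ x, 2 * limsup H (𝓝 x) := le_iInf hH.limsup_nhds_one_le
    _ = 0 := by rw [← ENNReal.mul_iInf_of_ne two_ne_zero ENNReal.ofNat_ne_top, h0, mul_zero]

theorem continuous_of_tendsto_nhds_one (hH : IsGradedSubgroup H)
    (h1 : Tendsto H (𝓝 1) (𝓝 0)) : Continuous H := by
  refine continuous_iff_continuousAt.2 fun g ↦ ?_
  have hsmall : Tendsto (fun y ↦ H (g⁻¹ * y)) (𝓝 g) (𝓝 0) :=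
    h1.comp (by simpa using (continuous_const_mul g⁻¹).tendsto g)
  refine tendsto_of_tendsto_of_tendsto_of_le_of_le ?_ ?_ (hH.sub_inv_mul_le g)
    (hH.le_add_inv_mul g)
  · simpa using ENNReal.Tendsto.sub tendsto_const_nhds hsmall (.inr ENNReal.zero_ne_top)
  · simpa using tendsto_const_nhds.add hsmall

end IsGradedSubgroup

/-- If `H` is a semi-norm on a topological group and the infimum over all `x`
of its u.s.c. envelope `H°(x) = limsup_{y→x} H(y)` is `0`, then `H` is
continuous (hence clopen as a graded subgroup). -/
theorem gradedSubgroup_continuous_of_inf_interior {G : Type*} [Group G]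
    [TopologicalSpace G] [IsTopologicalGroup G] (H : G → ℝ≥0∞)
    (hH : IsGradedSubgroup H)
    (h0 : (⨅ x : G, limsup H (nhds x)) = 0) :
    Continuous H :=
  hH.continuous_of_tendsto_nhds_one (hH.tendsto_nhds_one h0)
end

section
/- Let G be a group and H a semi-norm on G. The following are equivalent: (1) the density character of the pseudometric d_H(g,h)=H(g⁻¹h) is strictly less than 2^{ℵ₀}; (2) for every ε > 0, any family of pairwise disjoint left translates of the set {g : H(g) < ε} has cardinality strictly less than 2^{ℵ₀}. -/
open scoped ENNReal Cardinal Pointwise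

/-- Zorn: a maximal family with pairwise disjoint translates exists. -/
lemma exists_maximal_disjoint_family {G : Type*} [Group G] (B : Set G) :
    ∃ M : Set G, Maximal
      (fun S : Set G => S.Pairwise fun a b => Disjoint (a • B) (b • B)) M := by
  apply zorn_subset
  intro c hc hchain
  refine ⟨⋃₀ c, ?_, fun s hs => Set.subset_sUnion_of_mem hs⟩
  intro a ha b hb hab
  obtain ⟨s, hs, has⟩ := ha
  obtain ⟨t, ht, hbt⟩ := hb
  rcases hchain.total hs ht with h | h
  · exact hc ht (h has) hbt hab
  · exact hc hs has (h hbt) hab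

/-- For a semi-norm `H` on a group `G`, the density character of the induced
left-invariant pseudometric `d_H(g,h) = H (g⁻¹h)` is `< 2^ℵ₀` if and only if,
for every `ε > 0`, every family of pairwise disjoint left translates of
`{g | H g < ε}` has cardinality `< 2^ℵ₀`. -/
theorem small_index_iff_disjoint_translates {G : Type*} [Group G]
    (H : G → ℝ≥0∞) (hH : IsGradedSubgroup H) :
    (∃ D : Set G, #D < Cardinal.continuum ∧
        ∀ g : G, ∀ ε : ℝ≥0∞, 0 < ε → ∃ h ∈ D, H (g⁻¹ * h) < ε) ↔
      (∀ ε : ℝ≥0∞, 0 < ε → ∀ S : Set G,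
        (S.Pairwise fun a b =>
          Disjoint (a • {g : G | H g < ε}) (b • {g : G | H g < ε})) →
        #S < Cardinal.continuum) := by
  obtain ⟨h1, hinv, hmul⟩ := hH
  constructor
  · rintro ⟨D, hD, hdense⟩ ε hε S hS
    have hε2 : 0 < ε / 2 := ENNReal.half_pos hε.ne'
    -- choose, for each `a ∈ S`, a point of `D` at distance `< ε/2`
    have hch : ∀ a : S, ∃ h : D, H ((a : G)⁻¹ * h) < ε / 2 := by
      rintro ⟨a, ha⟩
      obtain ⟨h, hhD, hh⟩ := hdense a (ε / 2) hε2
      exact ⟨⟨h, hhD⟩, hh⟩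
    choose f hf using hch
    have hinj : Function.Injective f := by
      rintro ⟨a, ha⟩ ⟨b, hb⟩ hfab
      by_contra hne
      have hab : a ≠ b := fun h => hne (Subtype.ext h)
      have hdisj := hS ha hb hab
      have hmem : ∀ x : S, (f x : G) ∈ (x : G) • {g : G | H g < ε} := by
        intro x
        rw [Set.mem_smul_set_iff_inv_smul_mem, smul_eq_mul]
        exact lt_of_lt_of_le (hf x) ENNReal.half_le_self
      have h1' := hmem ⟨a, ha⟩
      have h2' := hmem ⟨b, hb⟩
      rw [hfab] at h1'
      exact Set.disjoint_left.1 hdisj h1' h2'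
    calc #S ≤ #D := Cardinal.mk_le_of_injective hinj
      _ < Cardinal.continuum := hD
  · intro hR
    -- for each `n`, pick a maximal family w.r.t. the ball of radius `2⁻¹ ^ n / 2`
    have key : ∀ n : ℕ, ∃ M : Set G, #M < Cardinal.continuum ∧
        ∀ g : G, ∃ h ∈ M, H (g⁻¹ * h) < 2⁻¹ ^ n := by
      intro n
      set δ : ℝ≥0∞ := 2⁻¹ ^ n / 2 with hδ
      have hpow : (0 : ℝ≥0∞) < 2⁻¹ ^ n := ENNReal.pow_pos (by norm_num) n
      have hδpos : 0 < δ := ENNReal.half_pos hpow.ne'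
      obtain ⟨M, hM⟩ := exists_maximal_disjoint_family (G := G) {g : G | H g < δ}
      refine ⟨M, hR δ hδpos M hM.1, ?_⟩
      intro g
      -- the translate `g • B` must meet some `a • B` with `a ∈ M`
      have hmeet : ∃ a ∈ M, ¬ Disjoint (g • {x : G | H x < δ}) (a • {x : G | H x < δ}) := by
        by_cases hg : g ∈ M
        · refine ⟨g, hg, ?_⟩
          rw [Set.not_disjoint_iff]
          refine ⟨g * 1, ?_, ?_⟩ <;>
          · rw [Set.mem_smul_set_iff_inv_smul_mem, smul_eq_mul]
            simp [h1, hδpos]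
        · by_contra hcon
          push_neg at hcon
          have hins : (insert g M).Pairwise fun a b =>
              Disjoint (a • {x : G | H x < δ}) (b • {x : G | H x < δ}) := by
            intro a ha b hb hab
            rcases ha with rfl | ha
            · rcases hb with rfl | hb
              · exact absurd rfl hab
              · exact hcon b hb
            · rcases hb with rfl | hb
              · exact (hcon a ha).symm
              · exact hM.1 ha hb hab
          have := hM.2 hins (Set.subset_insert g M)
          exact hg (this (Set.mem_insert g M))
      obtain ⟨a, haM, hnd⟩ := hmeet
      rw [Set.not_disjoint_iff] at hnd
      obtain ⟨x, hx1, hx2⟩ := hnd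
      rw [Set.mem_smul_set_iff_inv_smul_mem, smul_eq_mul] at hx1 hx2
      refine ⟨a, haM, ?_⟩
      have heq : g⁻¹ * a = (g⁻¹ * x) * (a⁻¹ * x)⁻¹ := by group
      calc H (g⁻¹ * a) ≤ H (g⁻¹ * x) + H ((a⁻¹ * x)⁻¹) := heq ▸ hmul _ _
        _ = H (g⁻¹ * x) + H (a⁻¹ * x) := by rw [hinv]
        _ < δ + δ := ENNReal.add_lt_add hx1 hx2
        _ = 2⁻¹ ^ n := ENNReal.add_halves _
    choose M hMcard hMdense using key
    refine ⟨⋃ n, M n, ?_, ?_⟩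
    · have hcof : (ℵ₀ : Cardinal) < Cardinal.continuum.ord.cof := by
        have := Cardinal.lt_cof_power (a := ℵ₀) (b := 2) le_rfl (by norm_num)
        rwa [Cardinal.two_power_aleph0] at this
      have hsup : (⨆ n, #(M n)) < Cardinal.continuum :=
        Ordinal.iSup_lt_lift (by simpa using hcof) hMcard
      calc #(⋃ n, M n) ≤ (ℵ₀ : Cardinal) * ⨆ n, #(M n) := by
            have := Cardinal.mk_iUnion_le_lift (f := M)
            simpa using this
        _ < Cardinal.continuum := Cardinal.mul_lt_of_lt Cardinal.aleph0_le_continuum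
            Cardinal.aleph0_lt_continuum hsup
    · intro g ε hε
      obtain ⟨n, hn⟩ := ENNReal.exists_inv_two_pow_lt hε.ne'
      obtain ⟨h, hhM, hh⟩ := hMdense n g
      exact ⟨h, Set.mem_iUnion.2 ⟨n, hhM⟩, hh.trans hn⟩
end
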